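/- Fringe separation implies full separation: In a finite MDP, suppose Π_G is a nonempty set of deterministic policies such that (i) every policy in Π_G has strictly greater start-state value than every policy in the fringe Π_fringe (policies one single-state modification away from Π_G but not in Π_G), and (ii) Π_G is connected: for any π ∈ Π_G and any optimal policy π*, if π* ∉ Π_G then any improving path from π to π* crosses the fringe. Then every policy in Π_G has strictly greater start-state value than every policy not in Π_G. (It suffices to prove: some optimal policy lies in Π_G, and every π_b ∉ Π_G has an improving single-step path to an optimal policy passing through the fringe, hence V^{π_b}(s0) ≤ V^{π_f}(s0) for some fringe policy π_f.) -/

import Mathlib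

/-!
Policy improvement drives both halves. All optimal policies share one value function and are
exactly the policies greedy for it, so they form a product set, connected by single-state
switches; as no fringe policy is optimal, every optimal policy lies in `Pg`. A policy outside
`Pg` is then not optimal, and single-state improvements from it raise its value everywhere
until they enter `Pg`; the policy just before entering is a fringe policy whose value at `s0`
is at least that of the starting policy.
-/

open scoped BigOperators

/-- Probability of being in state `s` at time `t`, starting from `s0` and following
the deterministic policy `π` under transition kernel `T`. -/
def visit {S A : Type} [Fintype S] [DecidableEq S]
    (T : S → A → S → ℝ) (π : S → A) (s0 : S) : ℕ → S → ℝ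
  | 0, s => if s = s0 then 1 else 0
  | t + 1, s' => ∑ s, visit T π s0 t s * T s (π s) s'

/-- Value from state `s0`: V^π(s0) = Σ_t γ^t E[R(s_t, a_t)]. -/
noncomputable def value {S A : Type} [Fintype S] [DecidableEq S]
    (T : S → A → S → ℝ) (γ : ℝ) (R : S → A → ℝ) (π : S → A) (s0 : S) : ℝ :=
  ∑' t : ℕ, γ ^ t * ∑ s, visit T π s0 t s * R s (π s)


/-- `π` is optimal: its value dominates every policy's value at every state. -/
def Optimal {S A : Type} [Fintype S] [DecidableEq S]
    (T : S → A → S → ℝ) (γ : ℝ) (R : S → A → ℝ) (π : S → A) : Prop :=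
  ∀ (π' : S → A) (s : S), value T γ R π' s ≤ value T γ R π s

/-- `p` and `q` differ in exactly one state. -/
def DiffOne {S A : Type} (p q : S → A) : Prop :=
  ∃ s₀ : S, p s₀ ≠ q s₀ ∧ ∀ s : S, s ≠ s₀ → p s = q s

/-- The fringe of `Pg`: policies not in `Pg` that are one single-state modification
away from some policy in `Pg`. -/
def Fringe {S A : Type} (Pg : Set (S → A)) : Set (S → A) :=
  {π' | π' ∉ Pg ∧ ∃ π ∈ Pg, DiffOne π π'}

open Filter Finset

section SingleStateSwitch

variable {S A : Type} [DecidableEq S]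

theorem diffOne_update_self {π : S → A} {s : S} {a : A} (h : a ≠ π s) :
    DiffOne (Function.update π s a) π :=
  ⟨s, by simpa using h, fun _ hs => Function.update_of_ne hs _ _⟩

theorem subset_of_disjoint_fringe [Fintype S] {Pg O : Set (S → A)}
    (hO : ∀ π ∈ O, ∀ π' ∈ O, ∀ s, Function.update π s (π' s) ∈ O)
    {π₀ : S → A} (hπ₀ : π₀ ∈ Pg) (hπ₀O : π₀ ∈ O) (hdisj : Disjoint (Fringe Pg) O) :
    O ⊆ Pg := by
  suffices h : ∀ D : Finset S, ∀ π ∈ O, (∀ s ∉ D, π s = π₀ s) → π ∈ Pg from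
    fun π hπ => h univ π hπ (by simp)
  intro D
  induction D using Finset.induction_on with
  | empty => exact fun π _ hagree => (funext fun s => hagree s (notMem_empty s)) ▸ hπ₀
  | insert s D _ ih =>
    intro π hπ hagree
    have hπ' : Function.update π s (π₀ s) ∈ Pg := by
      refine ih _ (hO π hπ π₀ hπ₀O s) fun x hx => ?_
      rcases eq_or_ne x s with rfl | hxs
      · simp
      · rw [Function.update_of_ne hxs]
        exact hagree x (by simp [hxs, hx])
    by_cases hs : π₀ s = π s
    · rwa [hs, Function.update_eq_self] at hπ'
    by_contra hπPg
    exact hdisj.ne_of_mem ⟨hπPg, _, hπ', diffOne_update_self hs⟩ hπ rfl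

end SingleStateSwitch

section MDP

variable {S A : Type} [Fintype S] [DecidableEq S] {T : S → A → S → ℝ} {γ : ℝ} {R : S → A → ℝ}

def IsStochastic (T : S → A → S → ℝ) : Prop :=
  (∀ s a s', 0 ≤ T s a s') ∧ ∀ s a, ∑ s', T s a s' = 1

def qValue (T : S → A → S → ℝ) (γ : ℝ) (R : S → A → ℝ) (v : S → ℝ) (s : S) (a : A) : ℝ :=
  R s a + γ * ∑ s', T s a s' * v s'

theorem visit_nonneg (hT : IsStochastic T) (π : S → A) (x : S) :
    ∀ t s, 0 ≤ visit T π x t s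
  | 0, s => by simp only [visit]; split <;> norm_num
  | t + 1, _ => sum_nonneg fun s _ => mul_nonneg (visit_nonneg hT π x t s) (hT.1 _ _ _)

theorem sum_visit (hT : IsStochastic T) (π : S → A) (x : S) :
    ∀ t, ∑ s, visit T π x t s = 1
  | 0 => by simp [visit]
  | t + 1 => by
    simp only [visit]
    rw [sum_comm]
    simp [← mul_sum, hT.2, sum_visit hT π x t]

theorem sum_visit_succ_mul (π : S → A) (x : S) (t : ℕ) (f : S → ℝ) :
    ∑ s', visit T π x (t + 1) s' * f s' = ∑ s, visit T π x t s * ∑ s', T s (π s) s' * f s' := by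
  simp only [visit, sum_mul, mul_sum]
  rw [sum_comm]
  simp only [mul_assoc]

theorem sum_visit_zero_mul (π : S → A) (x : S) (f : S → ℝ) :
    ∑ s, visit T π x 0 s * f s = f x := by
  simp [visit]

theorem visit_succ_eq_sum (π : S → A) (x : S) :
    ∀ t s', visit T π x (t + 1) s' = ∑ s₁, T x (π x) s₁ * visit T π s₁ t s'
  | 0, s' => by simp [visit, ite_mul, mul_ite]
  | t + 1, s' => by
    rw [visit, sum_congr rfl fun s _ => by rw [visit_succ_eq_sum π x t s]]
    simp only [visit, sum_mul, mul_sum]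
    rw [sum_comm]
    simp only [mul_assoc]

theorem abs_sum_visit_mul_le (hT : IsStochastic T) (π : S → A) (x : S) (t : ℕ) (f : S → ℝ) :
    |∑ s, visit T π x t s * f s| ≤ ∑ s, |f s| := by
  refine (abs_sum_le_sum_abs _ _).trans (sum_le_sum fun s _ => ?_)
  have hle : visit T π x t s ≤ 1 :=
    sum_visit hT π x t ▸ single_le_sum (fun s _ => visit_nonneg hT π x t s) (mem_univ s)
  rw [abs_mul, abs_of_nonneg (visit_nonneg hT π x t s)]
  exact mul_le_of_le_one_left (abs_nonneg _) hle

theorem summable_discounted (hT : IsStochastic T) (hγ0 : 0 ≤ γ) (hγ1 : γ < 1)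
    (π : S → A) (x : S) (f : S → ℝ) :
    Summable fun t => γ ^ t * ∑ s, visit T π x t s * f s := by
  refine Summable.of_norm_bounded ((summable_geometric_of_lt_one hγ0 hγ1).mul_right
    (∑ s, |f s|)) fun t => ?_
  rw [Real.norm_eq_abs, abs_mul, abs_pow, abs_of_nonneg hγ0]
  exact mul_le_mul_of_nonneg_left (abs_sum_visit_mul_le hT π x t f) (pow_nonneg hγ0 t)

theorem value_eq_qValue (hT : IsStochastic T) (hγ0 : 0 ≤ γ) (hγ1 : γ < 1)
    (π : S → A) (x : S) : value T γ R π x = qValue T γ R (value T γ R π) x (π x) := by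
  have hshift : ∀ t, γ ^ (t + 1) * ∑ s, visit T π x (t + 1) s * R s (π s)
      = ∑ s₁, T x (π x) s₁ * (γ * (γ ^ t * ∑ s, visit T π s₁ t s * R s (π s))) := by
    intro t
    simp only [visit_succ_eq_sum π x t, sum_mul, mul_sum]
    rw [sum_comm]
    exact sum_congr rfl fun _ _ => sum_congr rfl fun _ _ => by ring
  rw [value, (summable_discounted hT hγ0 hγ1 π x _).tsum_eq_zero_add, sum_visit_zero_mul,
    tsum_congr hshift, Summable.tsum_finsetSum fun s₁ _ =>
      ((summable_discounted hT hγ0 hγ1 π s₁ _).mul_left γ).mul_left _, qValue, mul_sum]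
  simp only [pow_zero, one_mul, tsum_mul_left, value]
  congr 1
  exact sum_congr rfl fun _ _ => by ring

/-- Telescoping `v` along the trajectory of `π`. -/
theorem sum_range_discounted_reward (π : S → A) (x : S) (v : S → ℝ) (n : ℕ) :
    ∑ t ∈ range n, γ ^ t * ∑ s, visit T π x t s * R s (π s)
      = ∑ t ∈ range n, γ ^ t * ∑ s, visit T π x t s * (qValue T γ R v s (π s) - v s)
        + (v x - γ ^ n * ∑ s, visit T π x n s * v s) := by
  have hstep : ∀ t, γ ^ t * ∑ s, visit T π x t s * R s (π s)
      = γ ^ t * ∑ s, visit T π x t s * (qValue T γ R v s (π s) - v s)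
        + (γ ^ t * ∑ s, visit T π x t s * v s
          - γ ^ (t + 1) * ∑ s, visit T π x (t + 1) s * v s) := by
    intro t
    simp only [sum_visit_succ_mul, qValue, mul_sub, mul_add, sum_sub_distrib, sum_add_distrib,
      mul_left_comm _ γ, ← mul_sum]
    ring
  rw [sum_congr rfl fun t _ => hstep t, sum_add_distrib,
    sum_range_sub' (fun t => γ ^ t * ∑ s, visit T π x t s * v s), pow_zero, one_mul,
    sum_visit_zero_mul]

/-- The performance difference identity, against an arbitrary value function `v`. -/
theorem value_eq_add_tsum_advantage (hT : IsStochastic T) (hγ0 : 0 ≤ γ) (hγ1 : γ < 1)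
    (π : S → A) (x : S) (v : S → ℝ) :
    value T γ R π x
      = v x + ∑' t, γ ^ t * ∑ s, visit T π x t s * (qValue T γ R v s (π s) - v s) := by
  have hlim : Tendsto (fun n => ∑ t ∈ range n, γ ^ t * ∑ s, visit T π x t s * R s (π s)
      - (v x - γ ^ n * ∑ s, visit T π x n s * v s)) atTop (nhds (value T γ R π x - (v x - 0))) :=
    (summable_discounted hT hγ0 hγ1 π x _).hasSum.tendsto_sum_nat.sub
      (tendsto_const_nhds.sub (summable_discounted hT hγ0 hγ1 π x v).tendsto_atTop_zero)
  simp only [sum_range_discounted_reward π x v, add_sub_cancel_right, sub_zero] at hlim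
  rw [tendsto_nhds_unique (summable_discounted hT hγ0 hγ1 π x _).hasSum.tendsto_sum_nat hlim]
  ring

theorem qValue_le_value (hT : IsStochastic T) (hγ0 : 0 ≤ γ) (hγ1 : γ < 1)
    {π : S → A} {v : S → ℝ} (hv : ∀ s, v s ≤ qValue T γ R v s (π s)) (x : S) :
    qValue T γ R v x (π x) ≤ value T γ R π x := by
  rw [value_eq_add_tsum_advantage hT hγ0 hγ1 π x v]
  have hle := (summable_discounted hT hγ0 hγ1 π x _).le_tsum 0 fun t _ =>
    mul_nonneg (pow_nonneg hγ0 t) (sum_nonneg fun s _ =>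
      mul_nonneg (visit_nonneg hT π x t s) (sub_nonneg.2 (hv s)))
  rw [pow_zero, one_mul, sum_visit_zero_mul] at hle
  linarith

theorem value_le_of_qValue_le (hT : IsStochastic T) (hγ0 : 0 ≤ γ) (hγ1 : γ < 1)
    {v : S → ℝ} (hv : ∀ s a, qValue T γ R v s a ≤ v s) (π : S → A) (x : S) :
    value T γ R π x ≤ v x := by
  rw [value_eq_add_tsum_advantage hT hγ0 hγ1 π x v, add_le_iff_nonpos_right]
  exact tsum_nonpos fun t => mul_nonpos_of_nonneg_of_nonpos (pow_nonneg hγ0 t)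
    (sum_nonpos fun s _ => mul_nonpos_of_nonneg_of_nonpos (visit_nonneg hT π x t s)
      (sub_nonpos.2 (hv s (π s))))

end MDP

section Optimal

variable {S A : Type} [Fintype S] [DecidableEq S] {T : S → A → S → ℝ} {γ : ℝ} {R : S → A → ℝ}

theorem exists_value_lt_qValue_of_not_optimal (hT : IsStochastic T) (hγ0 : 0 ≤ γ) (hγ1 : γ < 1)
    {π : S → A} (hπ : ¬Optimal T γ R π) :
    ∃ s a, value T γ R π s < qValue T γ R (value T γ R π) s a := by
  by_contra! h
  exact hπ (value_le_of_qValue_le hT hγ0 hγ1 h)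

theorem value_le_value_update (hT : IsStochastic T) (hγ0 : 0 ≤ γ) (hγ1 : γ < 1)
    {π : S → A} {s : S} {a : A} (hlt : value T γ R π s < qValue T γ R (value T γ R π) s a) :
    (∀ x, value T γ R π x ≤ value T γ R (Function.update π s a) x) ∧
      value T γ R π s < value T γ R (Function.update π s a) s := by
  have hv : ∀ x, value T γ R π x
      ≤ qValue T γ R (value T γ R π) x (Function.update π s a x) := by
    intro x
    rcases eq_or_ne x s with rfl | hxs
    · simpa using hlt.le
    · rw [Function.update_of_ne hxs, ← value_eq_qValue hT hγ0 hγ1]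
  have hq := qValue_le_value hT hγ0 hγ1 hv
  refine ⟨fun x => (hv x).trans (hq x), ?_⟩
  have hqs := hq s
  rw [Function.update_self] at hqs
  exact hlt.trans_le hqs

/-- Optimal policies are exactly the greedy policies for the common optimal value function, so
the optimal policies form a product of per-state action sets. -/
theorem Optimal.update (hT : IsStochastic T) (hγ0 : 0 ≤ γ) (hγ1 : γ < 1)
    {π π' : S → A} (hπ : Optimal T γ R π) (hπ' : Optimal T γ R π') (s : S) :
    Optimal T γ R (Function.update π s (π' s)) := by
  have heq : value T γ R π' = value T γ R π := funext fun x => le_antisymm (hπ π' x) (hπ' π x)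
  have hv : ∀ x, value T γ R π x
      ≤ qValue T γ R (value T γ R π) x (Function.update π s (π' s) x) := by
    intro x
    rcases eq_or_ne x s with rfl | hxs
    · rw [Function.update_self, ← heq, ← value_eq_qValue hT hγ0 hγ1]
    · rw [Function.update_of_ne hxs, ← value_eq_qValue hT hγ0 hγ1]
  exact fun π'' x => (hπ π'' x).trans ((hv x).trans (qValue_le_value hT hγ0 hγ1 hv x))

/-- A policy outside `Pg` maximising the total value `∑ s, value π s` among those outside `Pg`
that beat `πb` at `s0` improves by one switch into `Pg`, so it lies on the fringe. -/
theorem exists_mem_fringe_value_le [Fintype A] (hT : IsStochastic T) (hγ0 : 0 ≤ γ) (hγ1 : γ < 1)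
    {Pg : Set (S → A)} (hPg : ∀ π, Optimal T γ R π → π ∈ Pg) {πb : S → A} (hπb : πb ∉ Pg)
    (s0 : S) : ∃ πf ∈ Fringe Pg, value T γ R πb s0 ≤ value T γ R πf s0 := by
  classical
  let C := univ.filter fun π => π ∉ Pg ∧ value T γ R πb s0 ≤ value T γ R π s0
  obtain ⟨π, hπC, hmax⟩ :=
    C.exists_max_image (fun π => ∑ x, value T γ R π x) ⟨πb, by simp [C, hπb]⟩
  simp only [C, mem_filter, mem_univ, true_and] at hπC hmax
  obtain ⟨s, a, hlt⟩ :=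
    exists_value_lt_qValue_of_not_optimal hT hγ0 hγ1 fun h => hπC.1 (hPg π h)
  obtain ⟨hmono, hstrict⟩ := value_le_value_update hT hγ0 hγ1 hlt
  have hne : a ≠ π s := by
    rintro rfl
    exact hlt.ne (value_eq_qValue hT hγ0 hγ1 π s)
  refine ⟨π, ⟨hπC.1, _, ?_, diffOne_update_self hne⟩, hπC.2⟩
  by_contra hout
  have := hmax _ ⟨hout, hπC.2.trans (hmono s0)⟩
  exact this.not_gt (sum_lt_sum (fun x _ => hmono x) ⟨s, mem_univ s, hstrict⟩)

end Optimal

/-- Fringe separation implies full separation: if every policy of a nonempty set `Pg`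
of optimal policies has strictly greater start-state value than every fringe policy,
then every policy in `Pg` has strictly greater start-state value than every policy
outside `Pg`. -/
theorem fringe_separation_implies_full {S A : Type}
    [Fintype S] [Fintype A] [DecidableEq S]
    (T : S → A → S → ℝ)
    (hT : (∀ s a s', 0 ≤ T s a s') ∧ ∀ s a, ∑ s', T s a s' = 1)
    (γ : ℝ) (hγ0 : 0 < γ) (hγ1 : γ < 1) (R : S → A → ℝ) (s0 : S)
    (Pg : Set (S → A)) (hne : Pg.Nonempty)
    (hopt : ∀ π ∈ Pg, Optimal T γ R π)
    (hfringe : ∀ πg ∈ Pg, ∀ πf ∈ Fringe Pg,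
      value T γ R πf s0 < value T γ R πg s0) :
    ∀ πg ∈ Pg, ∀ πb ∉ Pg, value T γ R πb s0 < value T γ R πg s0 := by
  obtain ⟨π₀, hπ₀⟩ := hne
  have hfringe_not_optimal : Disjoint (Fringe Pg) {π | Optimal T γ R π} :=
    Set.disjoint_left.2 fun πf hπf hoptf => (hfringe π₀ hπ₀ πf hπf).not_ge (hoptf π₀ s0)
  have hPg : ∀ π, Optimal T γ R π → π ∈ Pg := fun π hπ =>
    subset_of_disjoint_fringe (fun _ hπ _ hπ' s => hπ.update hT hγ0.le hγ1 hπ' s) hπ₀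
      (hopt π₀ hπ₀) hfringe_not_optimal hπ
  intro πg hπg πb hπb
  obtain ⟨πf, hπf, hle⟩ := exists_mem_fringe_value_le hT hγ0.le hγ1 hPg hπb s0
  exact hle.trans_lt (hfringe πg hπg πf hπf)
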